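/- arXiv:1907.02137 — 2 statements merged into one kernel-verified Lean document; each statement's English description precedes it below -/
import Mathlib

section
/- Let (A, M, ω) be a mutation algebra over K. Then (A, ω) is a weighted K-algebra, and for every f ∈ K(T) with ∂_i(f) = 0 for every variable t_i, one has ρ̂(f) = 0 for every substitution ρ : T → H_ω. In other words, mutation algebras satisfy every Peirce-evanescent identity. -/
namespace Evanescent

universe u v

variable {T : Type u}

/-- The commutativity relation on the free magma on `T`. -/
inductive CommRel (T : Type u) : FreeMagma T → FreeMagma T → Prop
  | comm (a b : FreeMagma T) : CommRel T (a * b) (b * a)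
  | mul_left {a b : FreeMagma T} (c : FreeMagma T) :
      CommRel T a b → CommRel T (a * c) (b * c)
  | mul_right (c : FreeMagma T) {a b : FreeMagma T} :
      CommRel T a b → CommRel T (c * a) (c * b)

/-- The free commutative magma on `T`: the set of commutative nonassociative
monomials (words) in the variables `T`. -/
def FreeCommMagma (T : Type u) : Type u := Quot (CommRel T)

namespace FreeCommMagma

instance : Mul (FreeCommMagma T) :=
  ⟨Quot.map₂ (· * ·) (fun a _ _ h => CommRel.mul_right a h)
    (fun _ _ b h => CommRel.mul_left b h)⟩

/-- The class of a nonassociative word in the free commutative magma. -/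
def mk (w : FreeMagma T) : FreeCommMagma T := Quot.mk (CommRel T) w

/-- The generator of the free commutative magma corresponding to a variable. -/
def of (t : T) : FreeCommMagma T := mk (FreeMagma.of t)

@[simp] lemma mk_mul (a b : FreeMagma T) : mk a * mk b = mk (a * b) := rfl

protected lemma mul_comm (a b : FreeCommMagma T) : a * b = b * a := by
  induction a using Quot.ind
  induction b using Quot.ind
  exact Quot.sound (CommRel.comm _ _)

instance : CommMagma (FreeCommMagma T) := ⟨FreeCommMagma.mul_comm⟩

end FreeCommMagma

section Peirce

variable (R : Type v) [Semiring R] [DecidableEq T]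

/-- The Peirce polynomial of a (noncommutative) nonassociative word, with
coefficients in `R`. -/
noncomputable def peirceAux (i : T) : FreeMagma T → Polynomial R
  | .of j => if j = i then 1 else 0
  | .mul u v => Polynomial.X * (peirceAux i u + peirceAux i v)

@[simp] lemma peirceAux_mul (i : T) (u v : FreeMagma T) :
    peirceAux R i (u * v) = Polynomial.X * (peirceAux R i u + peirceAux R i v) := rfl

@[simp] lemma peirceAux_of (i j : T) :
    peirceAux R i (FreeMagma.of j) = if j = i then 1 else 0 := rfl

/-- The number of occurrences of the variable `i` in a nonassociative word. -/
def countAux (i : T) : FreeMagma T → ℕ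
  | .of j => if j = i then 1 else 0
  | .mul u v => countAux i u + countAux i v

@[simp] lemma countAux_mul (i : T) (u v : FreeMagma T) :
    countAux i (u * v) = countAux i u + countAux i v := rfl

lemma peirceAux_respects (i : T) {a b : FreeMagma T} (h : CommRel T a b) :
    peirceAux R i a = peirceAux R i b := by
  induction h with
  | comm a b => simp [add_comm]
  | mul_left c h ih => simp [ih]
  | mul_right c h ih => simp [ih]

lemma countAux_respects (i : T) {a b : FreeMagma T} (h : CommRel T a b) :
    countAux i a = countAux i b := by
  induction h with
  | comm a b => simp [Nat.add_comm]
  | mul_left c h ih => simp [ih]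
  | mul_right c h ih => simp [ih]

/-- The Peirce polynomial `∂ᵢ(w)` of a commutative nonassociative monomial `w`,
determined by `∂ᵢ(tᵢ) = 1`, `∂ᵢ(tⱼ) = 0` for `j ≠ i`, and
`∂ᵢ(u·v) = X·(∂ᵢ(u) + ∂ᵢ(v))`. -/
noncomputable def FreeCommMagma.peirce (i : T) : FreeCommMagma T → Polynomial R :=
  Quot.lift (peirceAux R i) fun _ _ h => peirceAux_respects R i h

/-- The number of occurrences (degree) of the variable `i` in a commutative
nonassociative monomial. -/
def FreeCommMagma.count (i : T) : FreeCommMagma T → ℕ :=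
  Quot.lift (countAux i) fun _ _ h => countAux_respects i h

end Peirce

/-- Principal powers of an element of a magma: `ppow a n = a^(n+1)`,
i.e. `ppow a 0 = a` and `ppow a (n+1) = a * (ppow a n)`. -/
def ppow {M : Type v} [Mul M] (a : M) : ℕ → M
  | 0 => a
  | n + 1 => a * ppow a n

/-- Iterated left multiplication: `lpow a r g = a^{{r}} g`, i.e. `lpow a 0 g = g` and
`lpow a (r+1) g = a * (lpow a r g)`. -/
def lpow {M : Type v} [Mul M] (a : M) : ℕ → M → M
  | 0, g => g
  | r + 1, g => a * lpow a r g

section Algebra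

variable (K : Type v) [Field K]

/-- A commutative nonassociative monomial, viewed as an element of the free
commutative nonassociative algebra `K(T)` (realized as the magma algebra of the
free commutative magma). -/
noncomputable def mono (w : FreeCommMagma T) : MonoidAlgebra K (FreeCommMagma T) :=
  MonoidAlgebra.single w 1

/-- The augmentation (sum of the coefficients) of an element of the free
commutative nonassociative algebra. -/
noncomputable def aug : MonoidAlgebra K (FreeCommMagma T) →ₗ[K] K :=
  Finsupp.lsum K (fun _ => LinearMap.id) ∘ₗ (MonoidAlgebra.coeffLinearEquiv K).toLinearMap

/-- The Peirce polynomial `∂ᵢ : K(T) → K[X]`, the `K`-linear map determined on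
monomials by `∂ᵢ(tᵢ) = 1`, `∂ᵢ(tⱼ) = 0` for `j ≠ i`, and `∂ᵢ(u·v) = X·(∂ᵢ(u) + ∂ᵢ(v))`. -/
noncomputable def Dp [DecidableEq T] (i : T) :
    MonoidAlgebra K (FreeCommMagma T) →ₗ[K] Polynomial K :=
  Finsupp.lsum K (fun w => LinearMap.toSpanSingleton K (Polynomial K)
    (FreeCommMagma.peirce K i w)) ∘ₗ (MonoidAlgebra.coeffLinearEquiv K).toLinearMap

/-- The free commutative nonassociative algebra is commutative. -/
lemma fca_mul_comm (f g : MonoidAlgebra K (FreeCommMagma T)) : f * g = g * f := by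
  rw [MonoidAlgebra.mul_def, MonoidAlgebra.mul_def, Finsupp.sum_comm]
  refine Finsupp.sum_congr fun a _ => Finsupp.sum_congr fun c _ => ?_
  rw [FreeCommMagma.mul_comm, mul_comm (f.coeff c) (g.coeff a)]

end Algebra

section Subst

variable (K : Type v) [Field K] {A : Type*} [Mul A]

/-- Evaluation of a nonassociative word under a substitution of the variables. -/
def evalAux (ρ : T → A) : FreeMagma T → A
  | .of t => ρ t
  | .mul u v => evalAux ρ u * evalAux ρ v

@[simp] lemma evalAux_mul (ρ : T → A) (u v : FreeMagma T) :
    evalAux ρ (u * v) = evalAux ρ u * evalAux ρ v := rfl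

/-- Evaluation of a commutative nonassociative monomial in a commutative magma
under a substitution of the variables. -/
def FreeCommMagma.eval (hA : ∀ a b : A, a * b = b * a) (ρ : T → A) :
    FreeCommMagma T → A :=
  Quot.lift (evalAux ρ) (by
    intro a b h
    induction h with
    | comm a b => exact hA _ _
    | mul_left c h ih => simp [ih]
    | mul_right c h ih => simp [ih])

/-- The substitution homomorphism `ρ̂ : K(T) → A` extending a substitution
`ρ : T → A` of the variables, for `A` a commutative nonassociative `K`-algebra. -/
noncomputable def subst [AddCommMonoid A] [Module K A]
    (hA : ∀ a b : A, a * b = b * a) (ρ : T → A)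
    (f : MonoidAlgebra K (FreeCommMagma T)) : A :=
  f.coeff.sum fun w c => c • FreeCommMagma.eval hA ρ w

end Subst

/-- The list of the leaves of a nonassociative word (a rooted binary tree with
leaves labeled by the variables), together with their heights. -/
def leaves : FreeMagma T → List (T × ℕ)
  | .of t => [(t, 0)]
  | .mul u v => (leaves u ++ leaves v).map fun p => (p.1, p.2 + 1)

end Evanescent

/-!
On the hyperplane `H_ω` the product of a mutation algebra is affine: `x * y = N (x + y)` with
`N = ½ M`, and `H_ω` is closed under it. Hence every monomial evaluated on `H_ω` equals
`∑ᵢ ∂ᵢ(w)(N) (ρ tᵢ)`: each multiplication applies `N` to the sum of both factors, which is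
exactly the recursion defining `∂ᵢ`. By linearity `ρ̂(f) = ∑ᵢ ∂ᵢ(f)(N) (ρ tᵢ)`, which vanishes
when every `∂ᵢ(f)` does.
-/

namespace Evanescent

variable {T : Type*}

def varsAux [DecidableEq T] : FreeMagma T → Finset T
  | .of t => {t}
  | .mul u v => varsAux u ∪ varsAux v

lemma varsAux_respects [DecidableEq T] {a b : FreeMagma T} (h : CommRel T a b) :
    varsAux a = varsAux b := by
  induction h with
  | comm a b => exact Finset.union_comm _ _
  | mul_left c h ih => exact congrArg (· ∪ varsAux c) ih
  | mul_right c h ih => exact congrArg (varsAux c ∪ ·) ih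

def FreeCommMagma.vars [DecidableEq T] : FreeCommMagma T → Finset T :=
  Quot.lift varsAux fun _ _ h => varsAux_respects h

lemma Dp_apply [DecidableEq T] {K : Type*} [Field K] (i : T)
    (f : MonoidAlgebra K (FreeCommMagma T)) :
    Dp K i f = f.coeff.sum fun w c => c • FreeCommMagma.peirce K i w :=
  rfl

section MutationAlgebra

variable {K : Type*} [Field K] {A : Type*} [AddCommGroup A] [Module K A] [Mul A]
  {M : A →ₗ[K] A} {ω : A →ₗ[K] K}

lemma weight_mul_of_mutation (hchar : (2 : K) ≠ 0) (hωM : ∀ x, ω (M x) = ω x)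
    (hmul : ∀ x y : A, x * y = (2 : K)⁻¹ • (ω y • M x + ω x • M y)) (x y : A) :
    ω (x * y) = ω x * ω y := by
  rw [hmul, map_smul, map_add, map_smul, map_smul, hωM, hωM, smul_eq_mul, smul_eq_mul,
    smul_eq_mul]
  field_simp
  ring

lemma mul_eq_of_weight_eq_one (hmul : ∀ x y : A, x * y = (2 : K)⁻¹ • (ω y • M x + ω x • M y))
    {x y : A} (hx : ω x = 1) (hy : ω y = 1) :
    x * y = ((2 : K)⁻¹ • M) (x + y) := by
  rw [hmul, hx, hy, one_smul, one_smul, LinearMap.smul_apply, map_add]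

lemma weight_evalAux_eq_one (hchar : (2 : K) ≠ 0) (hωM : ∀ x, ω (M x) = ω x)
    (hmul : ∀ x y : A, x * y = (2 : K)⁻¹ • (ω y • M x + ω x • M y))
    {ρ : T → A} (hρ : ∀ t, ω (ρ t) = 1) (w : FreeMagma T) :
    ω (evalAux ρ w) = 1 := by
  induction w with
  | ih1 t => exact hρ t
  | ih2 u v ihu ihv =>
    rw [evalAux_mul, weight_mul_of_mutation hchar hωM hmul, ihu, ihv, one_mul]

lemma evalAux_eq_sum_aeval_peirceAux [DecidableEq T] (hchar : (2 : K) ≠ 0)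
    (hωM : ∀ x, ω (M x) = ω x)
    (hmul : ∀ x y : A, x * y = (2 : K)⁻¹ • (ω y • M x + ω x • M y))
    {ρ : T → A} (hρ : ∀ t, ω (ρ t) = 1) {S : Finset T} (w : FreeMagma T)
    (hS : varsAux w ⊆ S) :
    evalAux ρ w = ∑ i ∈ S, Polynomial.aeval ((2 : K)⁻¹ • M) (peirceAux K i w) (ρ i) := by
  induction w with
  | ih1 t =>
    rw [Finset.sum_eq_single_of_mem t (Finset.singleton_subset_iff.mp hS) fun i _ hit => by
      rw [peirceAux_of, if_neg hit.symm, map_zero, LinearMap.zero_apply]]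
    rw [peirceAux_of, if_pos rfl, map_one, Module.End.one_apply]
    rfl
  | ih2 u v ihu ihv =>
    obtain ⟨hSu, hSv⟩ := Finset.union_subset_iff.mp hS
    rw [evalAux_mul, mul_eq_of_weight_eq_one hmul (weight_evalAux_eq_one hchar hωM hmul hρ u)
      (weight_evalAux_eq_one hchar hωM hmul hρ v), ihu hSu, ihv hSv, ← Finset.sum_add_distrib,
      map_sum]
    refine Finset.sum_congr rfl fun i _ => ?_
    rw [peirceAux_mul, map_mul, Polynomial.aeval_X, Module.End.mul_apply,
      map_add (Polynomial.aeval _), LinearMap.add_apply, map_add]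

lemma subst_eq_sum_aeval_Dp [DecidableEq T] (hchar : (2 : K) ≠ 0) (hωM : ∀ x, ω (M x) = ω x)
    (hmul : ∀ x y : A, x * y = (2 : K)⁻¹ • (ω y • M x + ω x • M y))
    (hA : ∀ a b : A, a * b = b * a) {ρ : T → A} (hρ : ∀ t, ω (ρ t) = 1)
    (f : MonoidAlgebra K (FreeCommMagma T)) :
    subst K hA ρ f = ∑ i ∈ f.coeff.support.sup FreeCommMagma.vars,
      Polynomial.aeval ((2 : K)⁻¹ • M) (Dp K i f) (ρ i) := by
  have heval : ∀ w ∈ f.coeff.support, FreeCommMagma.eval hA ρ w =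
      ∑ i ∈ f.coeff.support.sup FreeCommMagma.vars,
        Polynomial.aeval ((2 : K)⁻¹ • M) (FreeCommMagma.peirce K i w) (ρ i) := by
    intro w hw
    induction w using Quot.ind with
    | _ u =>
      exact evalAux_eq_sum_aeval_peirceAux hchar hωM hmul hρ u
        (Finset.le_sup (f := FreeCommMagma.vars) hw)
  simp only [Dp_apply, Finsupp.sum, map_sum, map_smul, LinearMap.sum_apply,
    LinearMap.smul_apply]
  rw [Finset.sum_comm, subst, Finsupp.sum]
  exact Finset.sum_congr rfl fun w hw => by rw [heval w hw, Finset.smul_sum]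

end MutationAlgebra

end Evanescent

open Evanescent in
/-- A mutation algebra `(A, M, ω)` is a weighted `K`-algebra and
satisfies every Peirce-evanescent identity. -/
theorem mutation_algebra_satisfies_evanescent
    {K : Type*} [Field K] (hchar : (2 : K) ≠ 0)
    {T : Type*} [DecidableEq T]
    {A : Type*} [AddCommGroup A] [Module K A] [Mul A]
    (M : A →ₗ[K] A) (ω : A →ₗ[K] K) (hωM : ∀ x, ω (M x) = ω x)
    (hmul : ∀ x y : A, x * y = (2 : K)⁻¹ • (ω y • M x + ω x • M y)) :
    (∀ x y : A, ω (x * y) = ω x * ω y) ∧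
    ∀ f : MonoidAlgebra K (FreeCommMagma T), (∀ i : T, Dp K i f = 0) →
      ∀ ρ : T → A, (∀ t, ω (ρ t) = 1) →
        subst K (fun a b => by rw [hmul a b, hmul b a, add_comm]) ρ f = 0 := by
  refine ⟨weight_mul_of_mutation hchar hωM hmul, fun f hf ρ hρ => ?_⟩
  rw [subst_eq_sum_aeval_Dp hchar hωM hmul _ hρ f]
  exact Finset.sum_eq_zero fun i _ => by rw [hf i, map_zero, LinearMap.zero_apply]
end

section
/- For integers p, q ≥ 1 set E_{p,q} = x^p·x^q − x^{p+1} − x^{q+1} + x² in K(x) (principal powers), and let ℰ be the two-sided ideal of K(x) generated by {E_{p,q} : p, q ≥ 1}. Then: (i) every f ∈ ℰ satisfies ε(f) = 0 and ∂_x(f) = 0, so every nonzero element of ℰ is a Peirce-evanescent identity; (ii) every commutative nonassociative monomial w of degree n is congruent modulo ℰ to an element π(w) of the span of the principal powers {x^k : 1 ≤ k ≤ n} with integer coefficients and ε(π(w)) = 1; in particular, for n ≥ 4 and w ≠ x^n, w − π(w) is a Peirce-evanescent identity. -/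
namespace Evanescent

/-- The single variable `x` of `K(x)`, as a monomial. -/
def x1 : FreeCommMagma Unit := FreeCommMagma.of ()

/-- The generators `E_{p,q} = x^p·x^q − x^{p+1} − x^{q+1} + x²` (for `p, q ≥ 1`);
here `ppow x1 k` denotes `x^(k+1)`. -/
noncomputable def Efam (K : Type*) [Field K] (p q : ℕ) :
    MonoidAlgebra K (FreeCommMagma Unit) :=
  mono K (ppow x1 p * ppow x1 q) - mono K (ppow x1 (p + 1))
    - mono K (ppow x1 (q + 1)) + mono K (ppow x1 1)

end Evanescent

namespace Evanescent

open Polynomial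

section PeirceKernel

variable {T : Type*} (K : Type*) [Field K]

lemma aug_single (w : FreeCommMagma T) (c : K) : aug K (MonoidAlgebra.single w c) = c :=
  Finsupp.lsum_single K (fun _ => LinearMap.id) w c

lemma aug_mono (w : FreeCommMagma T) : aug K (mono K w) = 1 :=
  aug_single K w 1

lemma mono_mul (a b : FreeCommMagma T) : mono K (a * b) = mono K a * mono K b := by
  rw [mono, mono, mono, MonoidAlgebra.single_mul_single, one_mul]

lemma aug_mul (f g : MonoidAlgebra K (FreeCommMagma T)) :
    aug K (f * g) = aug K f * aug K g := by
  induction f using MonoidAlgebra.induction_linear with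
  | zero => simp
  | add f₁ f₂ h₁ h₂ => rw [add_mul, map_add, h₁, h₂, map_add, add_mul]
  | single a b =>
    induction g using MonoidAlgebra.induction_linear with
    | zero => simp
    | add g₁ g₂ h₁ h₂ => rw [mul_add, map_add, h₁, h₂, map_add, mul_add]
    | single a' b' => rw [MonoidAlgebra.single_mul_single, aug_single, aug_single, aug_single]

variable [DecidableEq T] (i : T)

lemma count_mul (a b : FreeCommMagma T) :
    FreeCommMagma.count i (a * b) = FreeCommMagma.count i a + FreeCommMagma.count i b := by
  induction a using Quot.ind
  induction b using Quot.ind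
  rfl

lemma peirce_mul (a b : FreeCommMagma T) :
    FreeCommMagma.peirce K i (a * b) =
      X * (FreeCommMagma.peirce K i a + FreeCommMagma.peirce K i b) := by
  induction a using Quot.ind
  induction b using Quot.ind
  rfl

lemma Dp_single (w : FreeCommMagma T) (c : K) :
    Dp K i (MonoidAlgebra.single w c) = c • FreeCommMagma.peirce K i w :=
  Finsupp.lsum_single K _ w c

lemma Dp_mono (w : FreeCommMagma T) : Dp K i (mono K w) = FreeCommMagma.peirce K i w := by
  rw [mono, Dp_single, one_smul]

lemma Dp_mul (f g : MonoidAlgebra K (FreeCommMagma T)) :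
    Dp K i (f * g) = X * (aug K g • Dp K i f + aug K f • Dp K i g) := by
  induction f using MonoidAlgebra.induction_linear with
  | zero => simp
  | add f₁ f₂ h₁ h₂ =>
    rw [add_mul, map_add, h₁, h₂, map_add, map_add, smul_add, add_smul]
    ring
  | single a b =>
    induction g using MonoidAlgebra.induction_linear with
    | zero => simp
    | add g₁ g₂ h₁ h₂ =>
      rw [mul_add, map_add, h₁, h₂, map_add, map_add, smul_add, add_smul]
      ring
    | single a' b' =>
      rw [MonoidAlgebra.single_mul_single, Dp_single, Dp_single, Dp_single,
        aug_single, aug_single, peirce_mul]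
      simp only [smul_eq_C_mul, map_mul]
      ring

noncomputable def peirceKernel : TwoSidedIdeal (MonoidAlgebra K (FreeCommMagma T)) :=
  TwoSidedIdeal.mk' {f | aug K f = 0 ∧ Dp K i f = 0}
    ⟨map_zero _, map_zero _⟩
    (fun hf hg => ⟨by rw [map_add, hf.1, hg.1, add_zero], by rw [map_add, hf.2, hg.2, add_zero]⟩)
    (fun hf => ⟨by rw [map_neg, hf.1, neg_zero], by rw [map_neg, hf.2, neg_zero]⟩)
    (fun hg => ⟨by rw [aug_mul, hg.1, mul_zero],
      by rw [Dp_mul, hg.1, hg.2, zero_smul, smul_zero, add_zero, mul_zero]⟩)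
    (fun hf => ⟨by rw [aug_mul, hf.1, zero_mul],
      by rw [Dp_mul, hf.1, hf.2, zero_smul, smul_zero, zero_add, mul_zero]⟩)

lemma mem_peirceKernel {f : MonoidAlgebra K (FreeCommMagma T)} :
    f ∈ peirceKernel K i ↔ aug K f = 0 ∧ Dp K i f = 0 :=
  TwoSidedIdeal.mem_mk' _ _ _ _ _ _ f

end PeirceKernel

section Univariate

variable (K : Type*) [Field K]

/-- The ideal `ℰ`. -/
noncomputable abbrev evanescentIdeal : TwoSidedIdeal (MonoidAlgebra K (FreeCommMagma Unit)) :=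
  TwoSidedIdeal.span {f | ∃ p q : ℕ, f = Efam K p q}

lemma Efam_mem_evanescentIdeal (p q : ℕ) : Efam K p q ∈ evanescentIdeal K :=
  TwoSidedIdeal.subset_span ⟨p, q, rfl⟩

lemma Efam_mem_peirceKernel (p q : ℕ) : Efam K p q ∈ peirceKernel K () := by
  rw [mem_peirceKernel]
  constructor
  · simp only [Efam, map_add, map_sub, aug_mono]
    ring
  · simp only [Efam, map_add, map_sub, Dp_mono, ppow, peirce_mul]
    ring

lemma evanescentIdeal_le_peirceKernel : evanescentIdeal K ≤ peirceKernel K () :=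
  TwoSidedIdeal.span_le.mpr (by rintro _ ⟨p, q, rfl⟩; exact Efam_mem_peirceKernel K p q)

lemma count_ppow (k : ℕ) : FreeCommMagma.count () (ppow x1 k) = k + 1 := by
  induction k with
  | zero => rfl
  | succ k ih => rw [ppow, count_mul, ih, Nat.add_comm]; rfl

/-- Realizes `∑ aₖ Xᵏ` as `∑ aₖ x^{k+1}`. The coefficients are integers because `ℰ` is an
ideal of the ring `K(x)` and need not be closed under multiplication by scalars of `K`. -/
noncomputable def toPrincipal : ℤ[X] →ₗ[ℤ] MonoidAlgebra K (FreeCommMagma Unit) :=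
  lsum fun k => LinearMap.toSpanSingleton ℤ _ (mono K (ppow x1 k))

lemma toPrincipal_monomial (k : ℕ) (a : ℤ) :
    toPrincipal K (monomial k a) = a • mono K (ppow x1 k) := by
  simp [toPrincipal, lsum_apply]

lemma toPrincipal_X_pow (k : ℕ) : toPrincipal K (X ^ k) = mono K (ppow x1 k) := by
  rw [← monomial_one_right_eq_X_pow, toPrincipal_monomial, one_smul]

lemma toPrincipal_eq_sum_range {Q : ℤ[X]} {n : ℕ} (hQ : Q.natDegree < n) :
    toPrincipal K Q = ∑ k ∈ Finset.range n, (Q.coeff k : K) • mono K (ppow x1 k) := by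
  simp only [toPrincipal, lsum_apply, LinearMap.toSpanSingleton_apply, Int.cast_smul_eq_zsmul]
  exact sum_over_range' Q (f := fun k a => a • mono K (ppow x1 k)) (fun _ => zero_smul ℤ _) n hQ

lemma aug_toPrincipal (Q : ℤ[X]) : aug K (toPrincipal K Q) = (Q.eval 1 : ℤ) := by
  induction Q using Polynomial.induction_on' with
  | add Q₁ Q₂ h₁ h₂ => rw [map_add, map_add, h₁, h₂, eval_add, Int.cast_add]
  | monomial k a => simp [toPrincipal_monomial, aug_mono]

lemma coeff_toPrincipal_eq_zero {w : FreeCommMagma Unit} (hw : ∀ k, ppow x1 k ≠ w)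
    (Q : ℤ[X]) : (toPrincipal K Q).coeff w = 0 := by
  induction Q using Polynomial.induction_on' with
  | add Q₁ Q₂ h₁ h₂ => rw [map_add, MonoidAlgebra.coeff_add, Finsupp.add_apply, h₁, h₂, add_zero]
  | monomial k a =>
    rw [toPrincipal_monomial, MonoidAlgebra.coeff_smul_apply, mono, MonoidAlgebra.coeff_single,
      Finsupp.single_eq_of_ne (hw k).symm, smul_zero]

lemma mono_ne_toPrincipal {w : FreeCommMagma Unit} (hw : ∀ k, ppow x1 k ≠ w) (Q : ℤ[X]) :
    mono K w ≠ toPrincipal K Q := by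
  intro h
  have hcoeff := coeff_toPrincipal_eq_zero K hw Q
  rw [← h, mono, MonoidAlgebra.coeff_single, Finsupp.single_eq_same] at hcoeff
  exact one_ne_zero hcoeff

/-- The product of principal powers modulo `ℰ`, `x^{i+1} x^{j+1} ≡ x^{i+2} + x^{j+2} − x²`,
extended bilinearly to `ℤ[X]`. -/
noncomputable def principalMul (Q R : ℤ[X]) : ℤ[X] :=
  X * (C (R.eval 1) * Q + C (Q.eval 1) * R - C (Q.eval 1 * R.eval 1))

lemma principalMul_add_left (Q₁ Q₂ R : ℤ[X]) :
    principalMul (Q₁ + Q₂) R = principalMul Q₁ R + principalMul Q₂ R := by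
  simp only [principalMul, eval_add, C_add, C_mul]
  ring

lemma principalMul_add_right (Q R₁ R₂ : ℤ[X]) :
    principalMul Q (R₁ + R₂) = principalMul Q R₁ + principalMul Q R₂ := by
  simp only [principalMul, eval_add, C_add, C_mul]
  ring

lemma principalMul_monomial (i j : ℕ) (a b : ℤ) :
    principalMul (monomial i a) (monomial j b) = (a * b) • (X ^ (i + 1) + X ^ (j + 1) - X) := by
  rw [principalMul, eval_monomial, eval_monomial]
  simp only [one_pow, mul_one, ← C_mul_X_pow_eq_monomial, smul_eq_C_mul, C_mul]
  ring

lemma principalMul_of_eval_one {Q R : ℤ[X]} (hQ : Q.eval 1 = 1) (hR : R.eval 1 = 1) :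
    principalMul Q R = X * (Q + R - 1) := by
  simp only [principalMul, hQ, hR, mul_one, C_1, one_mul]

lemma toPrincipal_mul_sub_mem (Q R : ℤ[X]) :
    toPrincipal K Q * toPrincipal K R - toPrincipal K (principalMul Q R) ∈ evanescentIdeal K := by
  induction Q using Polynomial.induction_on' with
  | add Q₁ Q₂ h₁ h₂ =>
    convert TwoSidedIdeal.add_mem _ h₁ h₂ using 1
    rw [map_add, add_mul, principalMul_add_left, map_add]
    abel
  | monomial i a =>
    induction R using Polynomial.induction_on' with
    | add R₁ R₂ h₁ h₂ =>
      convert TwoSidedIdeal.add_mem _ h₁ h₂ using 1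
      rw [map_add, mul_add, principalMul_add_right, map_add]
      abel
    | monomial j b =>
      convert TwoSidedIdeal.zsmul_mem _ (a * b) (Efam_mem_evanescentIdeal K i j) using 1
      rw [toPrincipal_monomial, toPrincipal_monomial, principalMul_monomial, map_smul, map_sub,
        map_add, toPrincipal_X_pow, toPrincipal_X_pow, ← pow_one X, toPrincipal_X_pow,
        smul_mul_smul_comm, ← mono_mul, Efam, ← smul_sub]
      congr 1
      abel

/-- The normal form `π(w) = ∑ cₖ Xᵏ` of a monomial `w`, standing for `∑ cₖ x^{k+1}`. -/
noncomputable def normalForm : FreeMagma Unit → ℤ[X]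
  | .of _ => 1
  | .mul u v => X * (normalForm u + normalForm v - 1)

lemma eval_one_normalForm (w : FreeMagma Unit) : (normalForm w).eval 1 = 1 := by
  induction w with
  | ih1 => simp [normalForm]
  | ih2 u v hu hv => simp [normalForm, hu, hv]

lemma natDegree_normalForm_lt (w : FreeMagma Unit) : (normalForm w).natDegree < countAux () w := by
  induction w with
  | ih1 => simp [normalForm, countAux]
  | ih2 u v hu hv =>
    have hsum := natDegree_sub_le (normalForm u + normalForm v) 1
    have hadd := natDegree_add_le (normalForm u) (normalForm v)
    have hmul := natDegree_mul_le (p := (X : ℤ[X])) (q := normalForm u + normalForm v - 1)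
    simp only [natDegree_X, natDegree_one] at hsum hmul
    simp only [normalForm, countAux_mul]
    omega

lemma mono_sub_toPrincipal_normalForm_mem (w : FreeMagma Unit) :
    mono K (FreeCommMagma.mk w) - toPrincipal K (normalForm w) ∈ evanescentIdeal K := by
  induction w with
  | ih1 =>
    rw [normalForm, ← pow_zero X, toPrincipal_X_pow]
    convert TwoSidedIdeal.zero_mem _
    exact sub_self (mono K x1)
  | ih2 u v hu hv =>
    set gu := toPrincipal K (normalForm u)
    set gv := toPrincipal K (normalForm v)
    have hprod : normalForm (u * v) = principalMul (normalForm u) (normalForm v) :=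
      (principalMul_of_eval_one (eval_one_normalForm u) (eval_one_normalForm v)).symm
    have hsplit : mono K (FreeCommMagma.mk (u * v)) - toPrincipal K (normalForm (u * v)) =
        (mono K (FreeCommMagma.mk u) - gu) * mono K (FreeCommMagma.mk v)
          + gu * (mono K (FreeCommMagma.mk v) - gv)
          + (gu * gv - toPrincipal K (principalMul (normalForm u) (normalForm v))) := by
      rw [← FreeCommMagma.mk_mul, mono_mul, hprod, sub_mul, mul_sub]
      abel
    rw [hsplit]
    exact TwoSidedIdeal.add_mem _ (TwoSidedIdeal.add_mem _
      (TwoSidedIdeal.mul_mem_right _ _ _ hu) (TwoSidedIdeal.mul_mem_left _ _ _ hv))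
      (toPrincipal_mul_sub_mem K _ _)

end Univariate

end Evanescent

open Evanescent in
theorem evanescent_ideal_univariate_general
    {K : Type*} [Field K] :
    (∀ f ∈ TwoSidedIdeal.span {f : MonoidAlgebra K (FreeCommMagma Unit) |
        ∃ p q : ℕ, f = Efam K p q},
      aug K f = 0 ∧ Dp K () f = 0) ∧
    (∀ w : FreeCommMagma Unit,
      ∃ g : MonoidAlgebra K (FreeCommMagma Unit),
        mono K w - g ∈ TwoSidedIdeal.span {f : MonoidAlgebra K (FreeCommMagma Unit) |
          ∃ p q : ℕ, f = Efam K p q} ∧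
        (∃ c : ℕ → ℤ,
          g = ∑ k ∈ Finset.range (FreeCommMagma.count () w), (c k : K) • mono K (ppow x1 k)) ∧
        aug K g = 1 ∧
        (4 ≤ FreeCommMagma.count () w → w ≠ ppow x1 (FreeCommMagma.count () w - 1) →
          mono K w - g ≠ 0)) := by
  refine ⟨fun f hf => (mem_peirceKernel K ()).mp (evanescentIdeal_le_peirceKernel K hf), ?_⟩
  rintro ⟨w⟩
  refine ⟨toPrincipal K (normalForm w), mono_sub_toPrincipal_normalForm_mem K w,
    ⟨fun k => (normalForm w).coeff k, toPrincipal_eq_sum_range K (natDegree_normalForm_lt w)⟩,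
    by rw [aug_toPrincipal, eval_one_normalForm, Int.cast_one], fun _ hw => ?_⟩
  refine sub_ne_zero.mpr (mono_ne_toPrincipal K (fun k hk => hw ?_) _)
  rw [← hk, count_ppow, Nat.add_sub_cancel]

open Evanescent in
/-- (i) Every element of the two-sided ideal `ℰ` generated by the
`E_{p,q}` has augmentation `0` and vanishing Peirce polynomial, hence every nonzero
element of `ℰ` is a Peirce-evanescent identity; (ii) every monomial `w` of degree `n` is
congruent mod `ℰ` to an integer combination `π(w)` of `x¹, …, xⁿ` of augmentation `1`;
for `n ≥ 4` and `w ≠ xⁿ`, `w − π(w)` is a Peirce-evanescent identity. -/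
theorem evanescent_ideal_univariate
    {K : Type*} [Field K] (hchar : (2 : K) ≠ 0) :
    (∀ f ∈ TwoSidedIdeal.span {f : MonoidAlgebra K (FreeCommMagma Unit) |
        ∃ p q : ℕ, f = Efam K p q},
      aug K f = 0 ∧ Dp K () f = 0) ∧
    (∀ w : FreeCommMagma Unit,
      ∃ g : MonoidAlgebra K (FreeCommMagma Unit),
        mono K w - g ∈ TwoSidedIdeal.span {f : MonoidAlgebra K (FreeCommMagma Unit) |
          ∃ p q : ℕ, f = Efam K p q} ∧
        (∃ c : ℕ → ℤ,
          g = ∑ k ∈ Finset.range (FreeCommMagma.count () w), (c k : K) • mono K (ppow x1 k)) ∧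
        aug K g = 1 ∧
        (4 ≤ FreeCommMagma.count () w → w ≠ ppow x1 (FreeCommMagma.count () w - 1) →
          mono K w - g ≠ 0)) :=
  evanescent_ideal_univariate_general
end
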